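/- arXiv:1311.7030 — 2 statements merged into one kernel-verified Lean document; each statement's English description precedes it below -/
import Mathlib

section
/- Let S_τ = (I - τA)^{-1} for τ > 0. Then for any 0 ≤ κ ≤ 1 and any integer j ≥ 1, the operator norm satisfies |(-A)^{1-κ} S_τ^j| ≤ (jτ)^{-(1-κ)} (1 + λ₀ τ)^{-jκ}. -/
/-!
Since `S_τ` and `(-A)^{1-κ}` are both diagonal in the eigenbasis, the operator norm is the
supremum over `k` of the scalar `λ_k^{1-κ} (1 + λ_k τ)^{-j}`. Writing `x = (1 + λτ)^{-j}` as
`x^{1-κ} x^κ`, that scalar is `(λ x)^{1-κ} x^κ`; Bernoulli's inequality `jτλ ≤ (1 + λτ)^j` bounds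
`λ x` by `(jτ)⁻¹`, and `x^κ` is largest at the smallest eigenvalue `λ₀`.
-/

open scoped InnerProductSpace

namespace HilbertBasis

variable {ι 𝕜 E : Type*} [RCLike 𝕜] [NormedAddCommGroup E] [InnerProductSpace 𝕜 E]

theorem repr_apply_of_apply_eq_smul (b : HilbertBasis ι 𝕜 E) {R : E →L[𝕜] E} {c : ι → 𝕜}
    (hR : ∀ i, R (b i) = c i • b i) (x : E) (i : ι) :
    b.repr (R x) i = c i * b.repr x i := by
  have hdense : Dense (Submodule.span 𝕜 (Set.range b) : Set E) :=
    Submodule.dense_iff_topologicalClosure_eq_top.mpr b.dense_span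
  have hcoeff : (innerSL 𝕜 (b i)).comp R = c i • innerSL 𝕜 (b i) := by
    refine ContinuousLinearMap.ext_on hdense ?_
    rintro - ⟨j, rfl⟩
    rcases eq_or_ne i j with rfl | hij
    · simp [hR]
    · simp [hR, b.orthonormal.inner_eq_zero hij]
  simpa [b.repr_apply_apply] using congr($hcoeff x)

theorem opNorm_le_of_apply_eq_smul (b : HilbertBasis ι 𝕜 E) {R : E →L[𝕜] E} {c : ι → 𝕜}
    {C : ℝ} (hC : 0 ≤ C) (hR : ∀ i, R (b i) = c i • b i) (hc : ∀ i, ‖c i‖ ≤ C) :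
    ‖R‖ ≤ C := by
  refine R.opNorm_le_bound hC fun x => ?_
  calc ‖R x‖ = ‖b.repr (R x)‖ := (b.repr.norm_map _).symm
    _ ≤ ‖(C : 𝕜) • b.repr x‖ := lp.norm_mono two_ne_zero fun i => by
        simp only [b.repr_apply_of_apply_eq_smul hR, lp.coeFn_smul, Pi.smul_apply, smul_eq_mul,
          norm_mul, RCLike.norm_ofReal, abs_of_nonneg hC]
        exact mul_le_mul_of_nonneg_right (hc i) (norm_nonneg _)
    _ = C * ‖x‖ := by
        rw [lp.norm_const_smul two_ne_zero, b.repr.norm_map, RCLike.norm_ofReal, abs_of_nonneg hC]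

end HilbertBasis

open Real in
theorem rpow_one_sub_mul_inv_pow_le {l l₀ τ κ : ℝ} {j : ℕ} (hl₀ : 0 ≤ l₀) (hl : l₀ ≤ l)
    (hτ : 0 < τ) (hj : 1 ≤ j) (hκ₀ : 0 ≤ κ) (hκ₁ : κ ≤ 1) :
    l ^ (1 - κ) * ((1 + l * τ)⁻¹) ^ j ≤ (j * τ) ^ (κ - 1) * (1 + l₀ * τ) ^ (-(j : ℝ) * κ) := by
  have hl0 : 0 ≤ l := hl₀.trans hl
  have hjτ : 0 < (j : ℝ) * τ := by positivity
  have hl₀τ : 0 < 1 + l₀ * τ := by positivity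
  have hlτ : 0 < 1 + l * τ := by positivity
  set x := ((1 + l * τ)⁻¹) ^ j with hx_def
  have hx : 0 < x := by positivity
  have bernoulli : j * τ * l ≤ (1 + l * τ) ^ j := by
    linarith [one_add_mul_le_pow (a := l * τ) (by nlinarith) j]
  have hlx : l * x ≤ (j * τ)⁻¹ := by
    rw [hx_def, inv_pow, mul_inv_le_iff₀ (by positivity), le_inv_mul_iff₀ hjτ]
    linarith
  have hxκ : x ^ κ ≤ (1 + l₀ * τ) ^ (-(j : ℝ) * κ) := calc
    x ^ κ = (1 + l * τ) ^ (-(j : ℝ) * κ) := by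
      rw [rpow_mul hlτ.le, rpow_neg hlτ.le, rpow_natCast, hx_def, inv_pow]
    _ ≤ (1 + l₀ * τ) ^ (-(j : ℝ) * κ) :=
      rpow_le_rpow_of_nonpos hl₀τ (by gcongr) (by nlinarith)
  calc l ^ (1 - κ) * x = (l * x) ^ (1 - κ) * x ^ κ := by
        rw [mul_rpow hl0 hx.le, mul_assoc, ← rpow_add hx]
        norm_num
    _ ≤ ((j * τ)⁻¹) ^ (1 - κ) * (1 + l₀ * τ) ^ (-(j : ℝ) * κ) := by
        gcongr
    _ = (j * τ) ^ (κ - 1) * (1 + l₀ * τ) ^ (-(j : ℝ) * κ) := by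
        rw [inv_rpow hjτ.le, ← rpow_neg hjτ.le, neg_sub]

theorem stmt3_general
    {H : Type*} [NormedAddCommGroup H] [InnerProductSpace ℝ H]
    (b : HilbertBasis ℕ ℝ H) (lam : ℕ → ℝ)
    (hpos : ∀ k, 0 < lam k) (hmono : Monotone lam) :
    ∀ κ : ℝ, 0 ≤ κ → κ ≤ 1 → ∀ τ : ℝ, 0 < τ → ∀ j : ℕ, 1 ≤ j →
      ∀ R : H →L[ℝ] H,
        (∀ k, R (b k) = ((lam k ^ ((1:ℝ) - κ)) * ((1 + lam k * τ)⁻¹) ^ j) • b k) →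
        ‖R‖ ≤ ((j : ℝ) * τ) ^ (κ - 1) * (1 + lam 0 * τ) ^ (-(j : ℝ) * κ) := by
  intro κ hκ₀ hκ₁ τ hτ j hj R hR
  have hlam₀ : 0 ≤ lam 0 := (hpos 0).le
  refine b.opNorm_le_of_apply_eq_smul (by positivity) hR fun k => ?_
  have hlam : 0 ≤ lam k := (hpos k).le
  rw [Real.norm_of_nonneg (by positivity)]
  exact rpow_one_sub_mul_inv_pow_le hlam₀ (hmono k.zero_le) hτ hj hκ₀ hκ₁

/-- For `S_τ = (I - τA)⁻¹`, the composite `(-A)^{1-κ} S_τ^j` (given spectrally) satisfies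
`‖(-A)^{1-κ} S_τ^j‖ ≤ (jτ)^{-(1-κ)} (1+λ₀τ)^{-jκ}`. -/
theorem stmt3
    {H : Type*} [NormedAddCommGroup H] [InnerProductSpace ℝ H] [CompleteSpace H]
    (b : HilbertBasis ℕ ℝ H) (lam : ℕ → ℝ)
    (hpos : ∀ k, 0 < lam k) (hmono : Monotone lam) :
    ∀ κ : ℝ, 0 ≤ κ → κ ≤ 1 → ∀ τ : ℝ, 0 < τ → ∀ j : ℕ, 1 ≤ j →
      ∀ R : H →L[ℝ] H,
        (∀ k, R (b k) = ((lam k ^ ((1:ℝ) - κ)) * ((1 + lam k * τ)⁻¹) ^ j) • b k) →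
        ‖R‖ ≤ ((j : ℝ) * τ) ^ (κ - 1) * (1 + lam 0 * τ) ^ (-(j : ℝ) * κ) :=
  stmt3_general b lam hpos hmono
end

section
/- Let S_τ = (I - τA)^{-1}. For any β ≥ 1 and any integer j ≥ β, the operator norm satisfies |(-A)^β S_τ^j| ≤ β^β / (jτ)^β. -/
open scoped RealInnerProductSpace

private lemma scalar_bound {lam τ β : ℝ} (hlam : 0 < lam) (hτ : 0 < τ) (hβ : 1 ≤ β)
    {j : ℕ} (hj : β ≤ (j : ℝ)) :
    lam ^ β * ((1 + lam * τ)⁻¹) ^ j ≤ β ^ β / ((j : ℝ) * τ) ^ β := by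
  have hβ0 : (0:ℝ) < β := lt_of_lt_of_le one_pos hβ
  have hj0 : (0:ℝ) < j := lt_of_lt_of_le hβ0 hj
  have hx : 0 < lam * τ := mul_pos hlam hτ
  have h1x0 : (0:ℝ) < 1 + lam * τ := by linarith
  have hratio : (1:ℝ) ≤ (j : ℝ) / β := (one_le_div hβ0).2 hj
  -- Bernoulli step: (1+x)^(j/β) ≥ 1 + (j/β) x ≥ (j/β) x
  have hbern : ((j:ℝ)/β) * (lam * τ) ≤ (1 + lam * τ) ^ ((j:ℝ)/β) := by
    have h := one_add_mul_self_le_rpow_one_add (by linarith : (-1:ℝ) ≤ lam * τ) hratio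
    nlinarith [h]
  have key : (((j:ℝ)/β) * (lam*τ)) ^ β ≤ (1 + lam*τ) ^ (j:ℝ) := by
    have h2 : (1 + lam*τ) ^ (j:ℝ) = ((1 + lam*τ) ^ ((j:ℝ)/β)) ^ β := by
      rw [← Real.rpow_mul h1x0.le, div_mul_cancel₀ _ hβ0.ne']
    rw [h2]
    exact Real.rpow_le_rpow (by positivity) hbern hβ0.le
  have hpow : ((1 + lam * τ)⁻¹) ^ j = ((1 + lam*τ) ^ (j:ℝ))⁻¹ := by
    rw [inv_pow, ← Real.rpow_natCast]
  rw [hpow]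
  have hden : (0:ℝ) < (((j:ℝ)/β) * (lam*τ)) ^ β := Real.rpow_pos_of_pos (by positivity) _
  have h3 : lam ^ β * ((1 + lam*τ) ^ (j:ℝ))⁻¹ ≤ lam ^ β * ((((j:ℝ)/β) * (lam*τ)) ^ β)⁻¹ := by
    apply mul_le_mul_of_nonneg_left _ (Real.rpow_nonneg hlam.le _)
    exact inv_anti₀ hden key
  refine h3.trans_eq ?_
  have heq : (((j:ℝ)/β) * (lam*τ)) = ((j:ℝ) * τ / β) * lam := by ring
  rw [heq, Real.mul_rpow (by positivity) hlam.le, mul_inv,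
    mul_comm (((j:ℝ)*τ/β) ^ β)⁻¹, ← mul_assoc,
    mul_inv_cancel₀ (Real.rpow_pos_of_pos hlam _).ne', one_mul,
    Real.div_rpow (by positivity) hβ0.le, inv_div]

/-- For `S_τ = (I - τA)⁻¹`, the composite `(-A)^β S_τ^j` (given spectrally) satisfies
`‖(-A)^β S_τ^j‖ ≤ β^β / (jτ)^β` whenever `β ≥ 1` and `j ≥ β`. -/
theorem stmt4
    {H : Type*} [NormedAddCommGroup H] [InnerProductSpace ℝ H] [CompleteSpace H]
    (b : HilbertBasis ℕ ℝ H) (lam : ℕ → ℝ)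
    (hpos : ∀ k, 0 < lam k) (hmono : Monotone lam) :
    ∀ β : ℝ, 1 ≤ β → ∀ τ : ℝ, 0 < τ → ∀ j : ℕ, β ≤ (j : ℝ) →
      ∀ R : H →L[ℝ] H,
        (∀ k, R (b k) = ((lam k ^ β) * ((1 + lam k * τ)⁻¹) ^ j) • b k) →
        ‖R‖ ≤ β ^ β / ((j : ℝ) * τ) ^ β := by
  intro β hβ τ hτ j hj R hR
  set μ : ℕ → ℝ := fun k => lam k ^ β * ((1 + lam k * τ)⁻¹) ^ j with hμ
  set C : ℝ := β ^ β / ((j : ℝ) * τ) ^ β with hC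
  have hβ0 : (0:ℝ) < β := lt_of_lt_of_le one_pos hβ
  have hj0 : (0:ℝ) < j := lt_of_lt_of_le hβ0 hj
  have hC0 : 0 ≤ C := div_nonneg (Real.rpow_nonneg hβ0.le _)
    (Real.rpow_nonneg (mul_nonneg hj0.le hτ.le) _)
  have hμ0 : ∀ k, 0 ≤ μ k := by
    intro k
    have h1 : (0:ℝ) < 1 + lam k * τ := by nlinarith [hpos k]
    exact mul_nonneg (Real.rpow_nonneg (hpos k).le _)
      (pow_nonneg (inv_nonneg.2 h1.le) _)
  have hμC : ∀ k, μ k ≤ C := fun k => scalar_bound (hpos k) hτ hβ hj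
  apply R.opNorm_le_bound hC0
  intro x
  -- inner products
  have hinner : ∀ k, ⟪b k, R x⟫ = μ k * b.repr x k := by
    intro k
    have hs := (b.hasSum_repr x).mapL R
    have hs2 := hs.mapL (innerSL ℝ (b k))
    have heq : ∀ i, (innerSL ℝ (b k)) (R (b.repr x i • b i))
        = if i = k then μ k * b.repr x k else 0 := by
      have horth := orthonormal_iff_ite.mp b.orthonormal
      intro i
      simp only [map_smul, hR i, innerSL_apply_apply, real_inner_smul_right, horth k i]
      rcases eq_or_ne i k with rfl | hik
      · simp; ring
      · simp [hik, Ne.symm hik]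
    rw [funext heq] at hs2
    have := hasSum_ite_eq k (μ k * b.repr x k)
    have hu := hs2.unique (by simpa using this)
    simpa using hu
  -- norm squared comparison
  have hRx : HasSum (fun i => ⟪R x, b i⟫ * ⟪b i, R x⟫) ⟪R x, R x⟫ :=
    b.hasSum_inner_mul_inner (R x) (R x)
  have hxx : HasSum (fun i => ⟪x, b i⟫ * ⟪b i, x⟫) ⟪x, x⟫ :=
    b.hasSum_inner_mul_inner x x
  have hterm : ∀ i, ⟪R x, b i⟫ * ⟪b i, R x⟫ ≤ C^2 * (⟪x, b i⟫ * ⟪b i, x⟫) := by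
    intro i
    have h1 : ⟪R x, b i⟫ = μ i * b.repr x i := by rw [real_inner_comm]; exact hinner i
    have h2 : ⟪b i, R x⟫ = μ i * b.repr x i := hinner i
    have h3 : ⟪x, b i⟫ = b.repr x i := by rw [real_inner_comm, ← b.repr_apply_apply]
    have h4 : ⟪b i, x⟫ = b.repr x i := (b.repr_apply_apply x i).symm
    rw [h1, h2, h3, h4]
    have : μ i ^ 2 ≤ C ^ 2 := pow_le_pow_left₀ (hμ0 i) (hμC i) 2
    nlinarith [sq_nonneg (b.repr x i), sq_nonneg (μ i * b.repr x i)]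
  have hsumle : ⟪R x, R x⟫ ≤ C^2 * ⟪x, x⟫ := by
    have := hasSum_le hterm hRx (hxx.mul_left (C^2))
    exact this
  have hnorm2 : ‖R x‖^2 ≤ (C * ‖x‖)^2 := by
    rw [← real_inner_self_eq_norm_sq]
    calc ⟪R x, R x⟫ ≤ C^2 * ⟪x, x⟫ := hsumle
    _ = (C * ‖x‖)^2 := by rw [real_inner_self_eq_norm_sq]; ring
  have h := Real.sqrt_le_sqrt hnorm2
  rwa [Real.sqrt_sq (norm_nonneg _), Real.sqrt_sq (mul_nonneg hC0 (norm_nonneg x))] at h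
end
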